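/- arXiv:2407.14660 — 5 statements merged into one kernel-verified Lean document; each statement's English description precedes it below -/
import Mathlib

section
/- The inverse function F_inv(x) = x^(2^n - 2) on F_{2^n} is not k-th order sum-free if and only if there exists a k-dimensional F_2-linear subspace E of F_{2^n} such that ∑_{0≠x∈E} 1/x = 0. -/
open scoped Classical

noncomputable instance (n : ℕ) : Fintype (GaloisField 2 n) := Fintype.ofFinite _

/-- `F : F_{2^n} → F_{2^n}` is `k`-th order sum-free if it sums to a nonzero value over
every `k`-dimensional affine `F_2`-subspace (coset `v + E`). -/
def KthOrderSumFree (n k : ℕ) (F : GaloisField 2 n → GaloisField 2 n) : Prop :=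
  ∀ (v : GaloisField 2 n) (E : Submodule (ZMod 2) (GaloisField 2 n)),
    Module.finrank (ZMod 2) E = k →
      (∑ x ∈ Finset.univ.filter (fun x => x ∈ E), F (v + x)) ≠ 0

/-!
For an `F_2`-subspace `E` of a field of characteristic two, the subspace polynomial
`L_E(X) = ∏_{x ∈ E} (X + x)` is additive, so its derivative is a nonzero constant `c`
(the product of the nonzero elements of `E`). For `v ∉ E` the logarithmic derivative then gives
`∑_{x ∈ E} 1 / (v + x) = c / L_E(v) ≠ 0`. Both facts are proved by adjoining one vector of `E`
at a time. So the sum of `x⁻¹` over a coset `v + E` can only vanish when `v ∈ E`, where it is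
`∑_{0 ≠ x ∈ E} 1 / x`; and on `F_{2^n}`, `x ^ (2 ^ n - 2) = x⁻¹`.
-/

open Finset

theorem Submodule.induction_sup_span_singleton_of_notMem {R M : Type*} [Semiring R]
    [AddCommMonoid M] [Module R M] [IsNoetherian R M] {motive : Submodule R M → Prop}
    (bot : motive ⊥) (sup : ∀ (N : Submodule R M) (x : M), x ∉ N → motive N → motive (N ⊔ R ∙ x))
    (N : Submodule R M) : motive N := by
  induction N, IsNoetherian.noetherian N using Submodule.fg_sup_span_induction with
  | bot => exact bot
  | sup N x _ ih =>
    by_cases hx : x ∈ N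
    · rwa [sup_eq_left.2 ((Submodule.span_singleton_le_iff_mem x N).2 hx)]
    · exact sup N x hx ih

section FiniteModule

variable {R M : Type*} [Ring R] [AddCommGroup M] [Module R M] [Fintype M]

theorem Finset.filter_mem_bot : univ.filter (· ∈ (⊥ : Submodule R M)) = {0} := by
  ext; simp

theorem Finset.sum_filter_mem_add_left {β : Type*} [AddCommMonoid β] (E : Submodule R M)
    {v : M} (hv : v ∈ E) (f : M → β) :
    ∑ x ∈ univ.filter (· ∈ E), f (v + x) = ∑ x ∈ univ.filter (· ∈ E), f x := by
  rw [sum_filter, sum_filter]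
  exact Fintype.sum_equiv (Equiv.addLeft v) _ _ (fun x => by simp [E.add_mem_iff_right hv])

end FiniteModule

section CharTwoModule

variable {M : Type*} [AddCommGroup M] [Module (ZMod 2) M]

theorem add_self_eq_zero_of_module_zmod_two (x : M) : x + x = 0 := by
  rw [← two_smul (ZMod 2) x, show (2 : ZMod 2) = 0 from rfl, zero_smul]

theorem add_add_cancel_left_of_module_zmod_two (e x : M) : e + (e + x) = x := by
  rw [← add_assoc, add_self_eq_zero_of_module_zmod_two, zero_add]

theorem Submodule.mem_sup_span_singleton_iff_of_two {E : Submodule (ZMod 2) M} {e x : M} :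
    x ∈ E ⊔ (ZMod 2) ∙ e ↔ x ∈ E ∨ e + x ∈ E := by
  constructor
  · intro hx
    obtain ⟨y, hy, z, hz, rfl⟩ := Submodule.mem_sup.1 hx
    obtain ⟨a, rfl⟩ := Submodule.mem_span_singleton.1 hz
    obtain rfl | rfl := (show ∀ a : ZMod 2, a = 0 ∨ a = 1 by decide) a
    · simpa using Or.inl hy
    · right
      rwa [one_smul, add_left_comm, add_self_eq_zero_of_module_zmod_two, add_zero]
  · rintro (h | h)
    · exact Submodule.mem_sup_left h
    · rw [← add_add_cancel_left_of_module_zmod_two e x, add_comm]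
      exact add_mem (Submodule.mem_sup_left h)
        (Submodule.mem_sup_right (Submodule.mem_span_singleton_self e))

theorem two_eq_zero_of_module_zmod_two (R : Type*) [Ring R] [Module (ZMod 2) R] :
    (2 : R) = 0 := by
  rw [← one_add_one_eq_two, add_self_eq_zero_of_module_zmod_two]

variable [Fintype M]

@[to_additive]
theorem Finset.prod_filter_mem_sup_span_singleton {β : Type*} [CommMonoid β]
    {E : Submodule (ZMod 2) M} {e : M} (he : e ∉ E) (f : M → β) :
    ∏ x ∈ univ.filter (· ∈ E ⊔ (ZMod 2) ∙ e), f x =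
      (∏ x ∈ univ.filter (· ∈ E), f x) * ∏ x ∈ univ.filter (· ∈ E), f (e + x) := by
  have hdisj : Disjoint (univ.filter (· ∈ E)) (univ.filter (fun x => e + x ∈ E)) :=
    disjoint_filter.2 fun x _ hx hex => he (by simpa using E.sub_mem hex hx)
  have htrans : ∏ x ∈ univ.filter (fun x => e + x ∈ E), f x =
      ∏ x ∈ univ.filter (· ∈ E), f (e + x) := by
    rw [prod_filter, prod_filter]
    exact Fintype.prod_equiv (Equiv.addLeft e) _ _
      (fun x => by simp [add_add_cancel_left_of_module_zmod_two])
  simp only [Submodule.mem_sup_span_singleton_iff_of_two]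
  rw [filter_or, prod_union hdisj, htrans]

end CharTwoModule

section SubspacePolynomial

variable {K : Type*} [Field K] [Fintype K] [Module (ZMod 2) K]

noncomputable def subspacePoly (E : Submodule (ZMod 2) K) (v : K) : K :=
  ∏ x ∈ univ.filter (· ∈ E), (v + x)

theorem subspacePoly_bot (v : K) : subspacePoly ⊥ v = v := by
  rw [subspacePoly, filter_mem_bot, prod_singleton, add_zero]

theorem subspacePoly_sup_span_singleton {E : Submodule (ZMod 2) K} {e : K} (he : e ∉ E)
    (v : K) : subspacePoly (E ⊔ (ZMod 2) ∙ e) v = subspacePoly E v * subspacePoly E (v + e) := by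
  simp only [subspacePoly, prod_filter_mem_sup_span_singleton he, add_left_comm v e, add_assoc]

theorem subspacePoly_ne_zero {E : Submodule (ZMod 2) K} {v : K} (hv : v ∉ E) :
    subspacePoly E v ≠ 0 :=
  prod_ne_zero_iff.2 fun _ hx hvx =>
    hv (eq_neg_of_add_eq_zero_left hvx ▸ E.neg_mem (mem_filter.1 hx).2)

theorem subspacePoly_add (E : Submodule (ZMod 2) K) (u w : K) :
    subspacePoly E (u + w) = subspacePoly E u + subspacePoly E w := by
  induction E using Submodule.induction_sup_span_singleton_of_notMem generalizing u w with
  | bot => simp only [subspacePoly_bot]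
  | sup E e he ih =>
    simp only [subspacePoly_sup_span_singleton he, ih]
    linear_combination subspacePoly E u * subspacePoly E w * two_eq_zero_of_module_zmod_two K

theorem exists_sum_inv_add_mul_subspacePoly_eq (E : Submodule (ZMod 2) K) :
    ∃ c ≠ 0, ∀ v ∉ E, (∑ x ∈ univ.filter (· ∈ E), (v + x)⁻¹) * subspacePoly E v = c := by
  induction E using Submodule.induction_sup_span_singleton_of_notMem with
  | bot =>
    refine ⟨1, one_ne_zero, fun v hv => ?_⟩
    rw [filter_mem_bot, sum_singleton, add_zero, subspacePoly_bot]
    exact inv_mul_cancel₀ (by simpa using hv)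
  | sup E e he ih =>
    obtain ⟨c, hc0, hc⟩ := ih
    refine ⟨c * subspacePoly E e, mul_ne_zero hc0 (subspacePoly_ne_zero he), fun v hv => ?_⟩
    rw [Submodule.mem_sup_span_singleton_iff_of_two, not_or, add_comm] at hv
    have hv₀ := hc v hv.1
    have hve := hc (v + e) hv.2
    rw [sum_filter_mem_sup_span_singleton he, subspacePoly_sup_span_singleton he]
    simp only [← add_assoc, subspacePoly_add] at hve ⊢
    -- with `S w = ∑_{x ∈ E} (w + x)⁻¹` and `L = subspacePoly E`, additivity of `L` gives
    -- `(S v + S (v + e)) * L v * L (v + e) = c * L (v + e) + c * L v = c * L e`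
    linear_combination subspacePoly E v * hve + (subspacePoly E v + subspacePoly E e) * hv₀ +
      c * subspacePoly E v * two_eq_zero_of_module_zmod_two K

theorem sum_inv_add_ne_zero {E : Submodule (ZMod 2) K} {v : K} (hv : v ∉ E) :
    ∑ x ∈ univ.filter (· ∈ E), (v + x)⁻¹ ≠ 0 := by
  obtain ⟨c, hc0, hc⟩ := exists_sum_inv_add_mul_subspacePoly_eq E
  intro h
  simpa [h] using (hc v hv).trans_ne hc0

theorem sum_inv_add_eq_zero_iff (E : Submodule (ZMod 2) K) (v : K) :
    ∑ x ∈ univ.filter (· ∈ E), (v + x)⁻¹ = 0 ↔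
      v ∈ E ∧ ∑ x ∈ univ.filter (fun x => x ∈ E ∧ x ≠ 0), x⁻¹ = 0 := by
  by_cases hv : v ∈ E
  · have hzero : ∑ x ∈ univ.filter (fun x => x ∈ E ∧ x ≠ 0), x⁻¹ =
        ∑ x ∈ univ.filter (· ∈ E), x⁻¹ :=
      sum_subset (fun x hx => by simp_all) (fun x _ hx => by simp_all)
    rw [sum_filter_mem_add_left E hv, hzero, and_iff_right hv]
  · simp only [hv, false_and, iff_false]
    exact sum_inv_add_ne_zero hv

end SubspacePolynomial

theorem FiniteField.pow_card_sub_two_eq_inv {K : Type*} [Field K] [Fintype K]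
    (hK : 2 < Fintype.card K) (x : K) : x ^ (Fintype.card K - 2) = x⁻¹ := by
  rcases eq_or_ne x 0 with rfl | hx
  · rw [zero_pow (by omega), inv_zero]
  · refine eq_inv_of_mul_eq_one_left ?_
    rw [← pow_succ, show Fintype.card K - 2 + 1 = Fintype.card K - 1 by omega,
      FiniteField.pow_card_sub_one_eq_one x hx]

/-- `F_inv(x) = x^(2^n - 2)` is not `k`-th order sum-free iff there exists a
`k`-dimensional `F_2`-linear subspace `E` of `F_{2^n}` with `∑_{0 ≠ x ∈ E} 1/x = 0`. -/
theorem not_sumFree_iff_exists_subspace (n k : ℕ) (hk : 1 ≤ k) (hkn : k ≤ n - 1) :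
    ¬ KthOrderSumFree n k (fun x => x ^ (2 ^ n - 2)) ↔
      ∃ E : Submodule (ZMod 2) (GaloisField 2 n),
        Module.finrank (ZMod 2) E = k ∧
        (∑ x ∈ Finset.univ.filter (fun x => x ∈ E ∧ x ≠ 0), x⁻¹) = 0 := by
  have hcard : Fintype.card (GaloisField 2 n) = 2 ^ n := by
    rw [← Nat.card_eq_fintype_card, GaloisField.card 2 n (by omega)]
  have hinv (x : GaloisField 2 n) : x ^ (2 ^ n - 2) = x⁻¹ := by
    have : 2 ^ 2 ≤ 2 ^ n := Nat.pow_le_pow_right two_pos (by omega)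
    rw [← hcard]
    exact FiniteField.pow_card_sub_two_eq_inv (by omega) x
  simp only [KthOrderSumFree, hinv, sum_inv_add_eq_zero_iff, ne_eq, not_forall, not_not,
    exists_prop]
  exact ⟨fun ⟨_, E, hE, _, hS⟩ => ⟨E, hE, hS⟩, fun ⟨E, hE, hS⟩ => ⟨0, E, hE, E.zero_mem, hS⟩⟩
end

section
/- For v_1,…,v_k ∈ F_{2^n} linearly independent over F_2, the sum ∑_{0≠x∈⟨v_1,…,v_k⟩} 1/x equals Δ_1(v_1,…,v_k) / Δ(v_1,…,v_k)^2, where Δ is the Moore determinant and Δ_1 is the k×k determinant with rows of powers 2^0, 2^2, 2^3, …, 2^k (the row of squares omitted, replaced by the row of 2^k-th powers). -/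
open scoped Classical

/-!
Let `Δ(v)` be the Moore determinant and `M_v(X) = Δ(v_1, …, v_k, X)`. Expanding along the last
column, `M_v = ∑_e m_e X^(2^e)`, where `m_e` is the Moore minor with row `e` omitted; so
`deg M_v ≤ 2^k` and `m_k = Δ(v)`. Frobenius is `F_2`-linear, so `M_v` vanishes on the `2^k`
elements of `⟨v⟩`, whence `M_v = Δ(v) ∏_{x ∈ ⟨v⟩} (X + x)`. Evaluating at `v_{k+1} ∉ ⟨v⟩`
shows by induction on `k` that `Δ ≠ 0` on independent families. Comparing coefficients of `X`
(`m_0 = Δ^2`) gives `∏_{x ≠ 0} x = Δ`, and comparing those of `X^2` (`m_1 = Δ_1`) gives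
`Δ_1 = Δ · ∏_{x ≠ 0} x · ∑_{x ≠ 0} 1/x`.
-/

open Polynomial Matrix Finset

section ProdXAddC

lemma coeff_zero_prod_X_add_C {R : Type*} [CommSemiring R] (s : Finset R) :
    (∏ x ∈ s, (X + C x)).coeff 0 = ∏ x ∈ s, x := by
  simp [coeff_zero_eq_eval_zero, eval_prod]

lemma coeff_one_prod_X_add_C {R : Type*} [CommSemiring R] (s : Finset R) :
    (∏ x ∈ s, (X + C x)).coeff 1 = ∑ x ∈ s, ∏ y ∈ s.erase x, y := by
  induction s using Finset.induction_on with
  | empty => simp [coeff_one]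
  | @insert a s ha ih =>
    rw [prod_insert ha, add_mul, coeff_add, coeff_X_mul, coeff_zero_prod_X_add_C, coeff_C_mul, ih,
      sum_insert ha, erase_insert ha, mul_sum]
    congr 1
    refine sum_congr rfl fun x hx => ?_
    rw [erase_insert_of_ne (ne_of_mem_of_not_mem hx ha).symm,
      prod_insert fun h => ha (mem_of_mem_erase h)]

lemma coeff_one_prod_X_add_C_eq_prod_mul_sum_inv {K : Type*} [Field K] {s : Finset K}
    (hs : (0 : K) ∉ s) :
    (∏ x ∈ s, (X + C x)).coeff 1 = (∏ x ∈ s, x) * ∑ x ∈ s, x⁻¹ := by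
  rw [coeff_one_prod_X_add_C, mul_sum]
  refine sum_congr rfl fun x hx => ?_
  rw [← mul_prod_erase s _ hx, mul_comm x, mul_assoc,
    mul_inv_cancel₀ (ne_of_mem_of_not_mem hx hs), mul_one]

end ProdXAddC

section CommRing

variable {R : Type*} [CommRing R]

def mooreMatrix {m k : ℕ} (v : Fin k → R) : Matrix (Fin m) (Fin k) R :=
  of fun i j => v j ^ 2 ^ (i : ℕ)

lemma mooreMatrix_map {S : Type*} [CommRing S] (f : R →+* S) {m k : ℕ} (v : Fin k → R) :
    (mooreMatrix v : Matrix (Fin m) (Fin k) R).map f = mooreMatrix (f ∘ v) := by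
  ext i j
  simp [mooreMatrix]

variable {k : ℕ} (v : Fin k → R)

def mooreDet : R :=
  (mooreMatrix v : Matrix (Fin k) (Fin k) R).det

def mooreMinor (e : Fin (k + 1)) : R :=
  ((mooreMatrix v : Matrix (Fin (k + 1)) (Fin k) R).submatrix e.succAbove id).det

lemma mooreMinor_last : mooreMinor v (Fin.last k) = mooreDet v := by
  simp [mooreMinor, mooreDet, mooreMatrix, submatrix]

lemma mooreMinor_zero [CharP R 2] : mooreMinor v 0 = mooreDet v ^ 2 := by
  have hfrob : (mooreMatrix v : Matrix (Fin (k + 1)) (Fin k) R).submatrix (Fin.succAbove 0) id =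
      (mooreMatrix v).map (frobenius R 2) := by
    ext i j
    simp only [mooreMatrix, submatrix_apply, map_apply, of_apply, id, Fin.succAbove_zero,
      Fin.val_succ, frobenius_def, pow_succ, pow_mul]
  rw [mooreMinor, hfrob, ← RingHom.mapMatrix_apply, ← RingHom.map_det, frobenius_def, mooreDet]

lemma mooreMinor_one :
    mooreMinor v 1 =
      (of fun i j : Fin k => v j ^ 2 ^ (if (i : ℕ) = 0 then 0 else (i : ℕ) + 1)).det := by
  unfold mooreMinor
  congr 1
  ext i j
  simp only [submatrix_apply, mooreMatrix, of_apply, id]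
  congr 2
  rcases k with _ | k
  · exact i.elim0
  by_cases hi : (i : ℕ) = 0
  · rw [if_pos hi, Fin.succAbove_of_castSucc_lt _ _ (by simp [Fin.lt_def, hi]), Fin.val_castSucc,
      hi]
  · rw [if_neg hi, Fin.succAbove_of_le_castSucc _ _ (by simp [Fin.le_def]; omega), Fin.val_succ]

noncomputable def moorePoly : R[X] :=
  mooreDet (Fin.snoc (fun j => C (v j)) X : Fin (k + 1) → R[X])

lemma eval_moorePoly (x : R) :
    (moorePoly v).eval x = mooreDet (Fin.snoc v x : Fin (k + 1) → R) := by
  rw [moorePoly, mooreDet, ← coe_evalRingHom, RingHom.map_det, RingHom.mapMatrix_apply,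
    mooreMatrix_map]
  congr 2
  ext j
  refine Fin.lastCases ?_ (fun j => ?_) j <;> simp

lemma moorePoly_eq_sum [CharP R 2] :
    moorePoly v = ∑ e : Fin (k + 1), C (mooreMinor v e) * X ^ 2 ^ (e : ℕ) := by
  rw [moorePoly, mooreDet, det_succ_column _ (Fin.last k)]
  refine sum_congr rfl fun e _ => ?_
  have hminor : (mooreMatrix (Fin.snoc (fun j => C (v j)) X : Fin (k + 1) → R[X])).submatrix
      e.succAbove (Fin.last k).succAbove = ((mooreMatrix v).submatrix e.succAbove id).map C := by
    ext i j
    simp [mooreMatrix]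
  rw [hminor, ← RingHom.mapMatrix_apply, ← RingHom.map_det, ← mooreMinor]
  simp only [mooreMatrix, of_apply, Fin.snoc_last]
  rw [CharTwo.neg_eq, one_pow, one_mul, mul_comm]

lemma coeff_moorePoly_two_pow [CharP R 2] (e : Fin (k + 1)) :
    (moorePoly v).coeff (2 ^ (e : ℕ)) = mooreMinor v e := by
  simp_rw [moorePoly_eq_sum, finsetSum_coeff, coeff_C_mul_X_pow]
  rw [sum_eq_single e (fun i _ hie => if_neg fun h => hie (Fin.ext
    (Nat.pow_right_injective le_rfl h.symm))) (by simp), if_pos rfl]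

lemma natDegree_moorePoly_le [CharP R 2] :
    (moorePoly v).natDegree ≤ 2 ^ k := by
  rw [moorePoly_eq_sum]
  refine natDegree_sum_le_of_forall_le _ _ fun e _ => (natDegree_C_mul_le _ _).trans ?_
  exact natDegree_X_pow_le _ |>.trans (Nat.pow_le_pow_right two_pos e.is_le)

end CommRing

section Field

variable {F : Type*} [Field F] [Algebra (ZMod 2) F] {k : ℕ}

lemma mooreDet_eq_zero_of_not_linearIndependent {v : Fin k → F}
    (hv : ¬ LinearIndependent (ZMod 2) v) : mooreDet v = 0 := by
  have := charP_of_injective_algebraMap' (ZMod 2) (A := F) 2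
  obtain ⟨c, hc, j, hj⟩ := Fintype.not_linearIndependent_iff.mp hv
  refine exists_mulVec_eq_zero_iff.mp ⟨fun j => algebraMap (ZMod 2) F (c j), fun h => hj ?_, ?_⟩
  · simpa using congrFun h j
  · ext i
    have := congrArg (· ^ 2 ^ (i : ℕ)) hc
    simp only [sum_pow_char_pow, _root_.smul_pow, ZMod.pow_card_pow] at this
    simpa [mulVec, dotProduct, mooreMatrix, Algebra.smul_def, mul_comm] using this

end Field

section FiniteField

variable {F : Type*} [Field F] [Fintype F] [Algebra (ZMod 2) F] {k : ℕ}

noncomputable def spanFinset (v : Fin k → F) : Finset F :=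
  univ.filter (· ∈ Submodule.span (ZMod 2) (Set.range v))

lemma mem_spanFinset {v : Fin k → F} {x : F} :
    x ∈ spanFinset v ↔ x ∈ Submodule.span (ZMod 2) (Set.range v) := by
  simp [spanFinset]

lemma card_spanFinset {v : Fin k → F} (hv : LinearIndependent (ZMod 2) v) :
    #(spanFinset v) = 2 ^ k := by
  rw [spanFinset, ← Fintype.card_subtype, Module.card_eq_pow_finrank (K := ZMod 2),
    finrank_span_eq_card hv, ZMod.card, Fintype.card_fin]

lemma moorePoly_eq_C_mul_prod {v : Fin k → F} (hv : LinearIndependent (ZMod 2) v) :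
    moorePoly v = C (mooreDet v) *
      ∏ x ∈ spanFinset v, (X + C x) := by
  have := charP_of_injective_algebraMap' (ZMod 2) (A := F) 2
  set D := moorePoly v - C (mooreDet v) * ∏ x ∈ spanFinset v, (X + C x)
  have hmonic : (∏ x ∈ spanFinset v, (X + C x)).Monic := monic_prod_of_monic _ _ fun x _ =>
    monic_X_add_C x
  have hdeg : (∏ x ∈ spanFinset v, (X + C x)).natDegree = 2 ^ k := by
    rw [natDegree_prod_of_monic _ _ fun x _ => monic_X_add_C x]
    simp [card_spanFinset hv]
  have hD_le : D.natDegree ≤ 2 ^ k := max_self (2 ^ k) ▸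
    natDegree_sub_le_of_le (natDegree_moorePoly_le v) ((natDegree_C_mul_le _ _).trans hdeg.le)
  have hD_coeff : D.coeff (2 ^ k) = 0 := by
    have := coeff_moorePoly_two_pow v (Fin.last k)
    rw [Fin.val_last, mooreMinor_last] at this
    rw [coeff_sub, coeff_C_mul, this, ← hdeg, hmonic.coeff_natDegree, mul_one, sub_self]
  rw [← sub_eq_zero]
  refine eq_zero_of_natDegree_lt_card_of_eval_eq_zero' D (spanFinset v) (fun x hx => ?_) ?_
  · have hM : (moorePoly v).eval x = 0 := by
      rw [eval_moorePoly]
      refine mooreDet_eq_zero_of_not_linearIndependent ?_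
      rw [linearIndependent_finSnoc, not_and, not_not]
      exact fun _ => mem_spanFinset.mp hx
    rw [eval_sub, hM, eval_mul, eval_prod, prod_eq_zero hx (by simp [CharTwo.add_self_eq_zero]),
      mul_zero, sub_zero]
  · refine card_spanFinset hv ▸ lt_of_le_of_ne hD_le fun h => ?_
    rw [← h, ← leadingCoeff, leadingCoeff_eq_zero] at hD_coeff
    rw [hD_coeff, natDegree_zero] at h
    exact (pow_pos two_pos k).ne h

lemma mooreDet_ne_zero {v : Fin k → F} (hv : LinearIndependent (ZMod 2) v) :
    mooreDet v ≠ 0 := by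
  have := charP_of_injective_algebraMap' (ZMod 2) (A := F) 2
  induction k with
  | zero => simp [mooreDet]
  | succ k ih =>
    rw [← Fin.snoc_init_self v, linearIndependent_finSnoc] at hv
    rw [← Fin.snoc_init_self v, ← eval_moorePoly, moorePoly_eq_C_mul_prod hv.1, eval_mul,
      eval_C, eval_prod]
    refine mul_ne_zero (ih hv.1) (prod_ne_zero_iff.mpr fun x hx h => hv.2 ?_)
    simpa [CharTwo.add_eq_zero.mp (by simpa using h)] using mem_spanFinset.mp hx

lemma sum_inv_spanFinset_erase_zero {v : Fin (k + 1) → F} (hv : LinearIndependent (ZMod 2) v) :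
    ∑ x ∈ (spanFinset v).erase 0, x⁻¹ =
      mooreMinor v 1 / mooreDet v ^ 2 := by
  have := charP_of_injective_algebraMap' (ZMod 2) (A := F) 2
  set Δ := mooreDet v
  set V := (spanFinset v).erase 0
  have hΔ : Δ ≠ 0 := mooreDet_ne_zero hv
  have hfactor : moorePoly v = C Δ * (X * ∏ x ∈ V, (X + C x)) := by
    rw [moorePoly_eq_C_mul_prod hv, ← mul_prod_erase _ _ (mem_spanFinset.mpr (zero_mem _)),
      C_0, add_zero]
  have hcoeff_one : Δ ^ 2 = Δ * ∏ x ∈ V, x := by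
    rw [← mooreMinor_zero, ← coeff_moorePoly_two_pow, hfactor, Fin.val_zero, pow_zero,
      coeff_C_mul, show (1 : ℕ) = 0 + 1 from rfl, coeff_X_mul, coeff_zero_prod_X_add_C]
  have hcoeff_two : mooreMinor v 1 = Δ * ((∏ x ∈ V, x) * ∑ x ∈ V, x⁻¹) := by
    rw [← coeff_moorePoly_two_pow, hfactor, Fin.val_one, pow_one, coeff_C_mul, coeff_X_mul,
      coeff_one_prod_X_add_C_eq_prod_mul_sum_inv (notMem_erase 0 _)]
  have hprod : ∏ x ∈ V, x = Δ := (mul_left_cancel₀ hΔ (sq Δ ▸ hcoeff_one)).symm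
  rw [eq_div_iff (pow_ne_zero 2 hΔ), hcoeff_two, hprod]
  ring

end FiniteField

theorem sum_inv_span_eq_general (n k : ℕ) (hk : 0 < k)
    (v : Fin k → GaloisField 2 n) (hv : LinearIndependent (ZMod 2) v) :
    (∑ x ∈ Finset.univ.filter
        (fun x => x ∈ Submodule.span (ZMod 2) (Set.range v) ∧ x ≠ 0), x⁻¹) =
      Matrix.det (Matrix.of fun i j : Fin k =>
          v j ^ 2 ^ (if (i : ℕ) = 0 then 0 else (i : ℕ) + 1))
        / (Matrix.det (Matrix.of fun i j : Fin k => v j ^ 2 ^ (i : ℕ))) ^ 2 := by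
  obtain ⟨k, rfl⟩ : ∃ m, k = m + 1 := ⟨k - 1, by omega⟩
  have hV : univ.filter (fun x => x ∈ Submodule.span (ZMod 2) (Set.range v) ∧ x ≠ 0) =
      (spanFinset v).erase 0 := by
    ext x
    simp [mem_spanFinset, and_comm]
  rw [hV, ← mooreMinor_one]
  exact sum_inv_spanFinset_erase_zero hv

/-- For `v_1, …, v_k ∈ F_{2^n}` linearly independent over `F_2`,
`∑_{0 ≠ x ∈ ⟨v_1,…,v_k⟩} 1/x = Δ_1(v_1,…,v_k) / Δ(v_1,…,v_k)^2`, where `Δ` is the Moore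
determinant and `Δ_1` is the determinant with rows of `2^e`-th powers for
`e ∈ {0, 2, 3, …, k}`. -/
theorem sum_inv_span_eq (n k : ℕ) (hn : 0 < n) (hk : 0 < k) (hkn : k ≤ n)
    (v : Fin k → GaloisField 2 n) (hv : LinearIndependent (ZMod 2) v) :
    (∑ x ∈ Finset.univ.filter
        (fun x => x ∈ Submodule.span (ZMod 2) (Set.range v) ∧ x ≠ 0), x⁻¹) =
      Matrix.det (Matrix.of fun i j : Fin k =>
          v j ^ 2 ^ (if (i : ℕ) = 0 then 0 else (i : ℕ) + 1))
        / (Matrix.det (Matrix.of fun i j : Fin k => v j ^ 2 ^ (i : ℕ))) ^ 2 :=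
  sum_inv_span_eq_general n k hk v hv
end

section
/- Let α ∈ F_{2^n} be a normal element over F_2 and write X^n − 1 = f·g in F_2[X] with deg f = k. Set x = g(σ)(α), where σ is Frobenius. Then x, σ(x), …, σ^{k−1}(x) are F_2-linearly independent, and f(σ)(x) = 0. -/
open Polynomial

/-- For `h = ∑ c_i X^i ∈ F_2[X]`, `h(σ)` applied to `y`, where `σ(y) = y^2` is the
Frobenius, i.e. `∑ c_i • y^(2^i)`. -/
noncomputable def applyFrob {n : ℕ} (h : (ZMod 2)[X]) (y : GaloisField 2 n) :
    GaloisField 2 n :=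
  ∑ i ∈ Finset.range (h.natDegree + 1), h.coeff i • y ^ 2 ^ i

/-!
Writing `σ` for the Frobenius, `h(σ)` is `aeval σ h`, so normality of `α` says that no nonzero
polynomial of degree `< n` annihilates `α` under `σ`. If `h` of degree `< k` annihilates
`g(σ) α`, then `h * g`, of degree `< k + deg g = n`, annihilates `α`; hence `h * g = 0` and
`h = 0`. Moreover `f(σ) g(σ) = σ ^ n - 1` vanishes because `X ^ n - 1` is the minimal
polynomial of the Frobenius of `F_{2^n}`.
-/

section CyclicVector

variable {R V : Type*} [CommRing R] [AddCommGroup V] [Module R V]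

theorem aeval_apply_eq_sum_fin (T : Module.End R V) (v : V) {n : ℕ} {p : R[X]}
    (hp : p.natDegree < n) : aeval T p v = ∑ i : Fin n, p.coeff i • (T ^ (i : ℕ)) v := by
  rw [aeval_eq_sum_range' hp, LinearMap.sum_apply, Fin.sum_univ_eq_sum_range
    (fun i => p.coeff i • (T ^ i) v)]
  rfl

theorem linearIndependent_pow_apply_iff (T : Module.End R V) (v : V) (n : ℕ) :
    LinearIndependent R (fun i : Fin n => (T ^ (i : ℕ)) v) ↔
      ∀ p : R[X], p.natDegree < n → aeval T p v = 0 → p = 0 := by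
  rw [Fintype.linearIndependent_iff]
  constructor
  · intro h p hp hpv
    rw [aeval_apply_eq_sum_fin T v hp] at hpv
    ext i
    rcases lt_or_ge i n with hi | hi
    · exact h _ hpv ⟨i, hi⟩
    · exact coeff_eq_zero_of_natDegree_lt (hp.trans_le hi)
  · intro h c hc i
    set q := (degreeLTEquiv R n).symm c
    have hq_coeff (j : Fin n) : (q : R[X]).coeff j = c j :=
      congrFun ((degreeLTEquiv R n).apply_symm_apply c) j
    have hq : (q : R[X]).natDegree < n := by
      rcases eq_or_ne (q : R[X]) 0 with h0 | h0
      · simp [h0, i.pos]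
      · exact (natDegree_lt_iff_degree_lt h0).2 (mem_degreeLT.1 q.2)
    have hq0 : (q : R[X]) = 0 :=
      h q hq (by simp only [aeval_apply_eq_sum_fin T v hq, hq_coeff, hc])
    rw [← hq_coeff, hq0, coeff_zero]

theorem linearIndependent_pow_apply_aeval [IsDomain R] {T : Module.End R V} {v : V} {n k : ℕ}
    (hv : LinearIndependent R (fun i : Fin n => (T ^ (i : ℕ)) v)) {g : R[X]} (hg : g ≠ 0)
    (hk : k + g.natDegree ≤ n) :
    LinearIndependent R (fun i : Fin k => (T ^ (i : ℕ)) (aeval T g v)) := by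
  rw [linearIndependent_pow_apply_iff] at hv ⊢
  intro p hp hpv
  have hpg : p * g = 0 := hv _ (natDegree_mul_le.trans_lt (by omega)) (by
    rw [map_mul, Module.End.mul_apply, hpv])
  exact (mul_eq_zero.mp hpg).resolve_right hg

end CyclicVector

open FiniteField

theorem frobeniusAlgHom_pow_apply (K R : Type*) [Field K] [Fintype K] [CommRing R] [Algebra K R]
    (i : ℕ) (y : R) :
    ((frobeniusAlgHom K R).toLinearMap ^ i) y = y ^ Fintype.card K ^ i := by
  rw [Module.End.coe_pow, AlgHom.coe_toLinearMap, coe_frobeniusAlgHom, pow_iterate]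

theorem applyFrob_eq_aeval {n : ℕ} (h : (ZMod 2)[X]) (y : GaloisField 2 n) :
    applyFrob h y = aeval (frobeniusAlgHom (ZMod 2) (GaloisField 2 n)).toLinearMap h y := by
  rw [applyFrob, aeval_eq_sum_range, LinearMap.sum_apply]
  simp [frobeniusAlgHom_pow_apply]

theorem GaloisField.aeval_frobeniusAlgHom_X_pow_sub_one (p : ℕ) [Fact p.Prime] {n : ℕ}
    (hn : n ≠ 0) :
    aeval (frobeniusAlgHom (ZMod p) (GaloisField p n)).toLinearMap (X ^ n - 1 : (ZMod p)[X]) =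
      0 := by
  have := minpoly.aeval (ZMod p) (frobeniusAlgHom (ZMod p) (GaloisField p n)).toLinearMap
  rwa [minpoly_frobeniusAlgHom, GaloisField.finrank p hn] at this

/-- Let `α ∈ F_{2^n}` be a normal element over `F_2` and `X^n - 1 = f·g` in `F_2[X]` with
`deg f = k`. Set `x = g(σ)(α)`. Then `x, σ(x), …, σ^(k-1)(x)` are `F_2`-linearly
independent and `f(σ)(x) = 0`. -/
theorem normal_element_construction (n k : ℕ) (hk : 1 ≤ k) (hkn : k ≤ n)
    (α : GaloisField 2 n)
    (hα : LinearIndependent (ZMod 2) (fun i : Fin n => α ^ 2 ^ (i : ℕ)))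
    (f g : (ZMod 2)[X]) (hfg : f * g = (X ^ n - 1 : (ZMod 2)[X]))
    (hdeg : f.natDegree = k) :
    LinearIndependent (ZMod 2) (fun i : Fin k => (applyFrob g α) ^ 2 ^ (i : ℕ)) ∧
    applyFrob f (applyFrob g α) = 0 := by
  set σ := (frobeniusAlgHom (ZMod 2) (GaloisField 2 n)).toLinearMap
  have hσ (i : ℕ) (y : GaloisField 2 n) : (σ ^ i) y = y ^ 2 ^ i := by
    simp [σ, frobeniusAlgHom_pow_apply]
  have hn : n ≠ 0 := by omega
  have hfg0 : f * g ≠ 0 := by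
    rw [hfg, ← C_1]; exact X_pow_sub_C_ne_zero (Nat.pos_of_ne_zero hn) 1
  have hdeg_sum : f.natDegree + g.natDegree = n := by
    rw [← natDegree_mul (left_ne_zero_of_mul hfg0) (right_ne_zero_of_mul hfg0), hfg, ← C_1,
      natDegree_X_pow_sub_C]
  simp only [← hσ, applyFrob_eq_aeval] at hα ⊢
  constructor
  · exact linearIndependent_pow_apply_aeval hα (right_ne_zero_of_mul hfg0) (by omega)
  · rw [← Module.End.mul_apply, ← map_mul, hfg,
      GaloisField.aeval_frobeniusAlgHom_X_pow_sub_one 2 hn, LinearMap.zero_apply]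
end

section
/- Define F_k = Δ_1(X_1,…,X_k)/Δ(X_1,…,X_k) ∈ F_2[X_1,…,X_k]. Then F_k is homogeneous of degree 2^k − 2, symmetric in X_1,…,X_k, and the exponents of X_1 appearing in F_k are among {0, 1, 2, 4, …, 2^{k−1}} (F_k is an affine 2-polynomial in X_1). -/
/-!
Expanding the determinants, `Δ` and `Δ₁` are sums of monomials `∏ Xⱼ ^ d (σ j)` over
permutations `σ`, so both are homogeneous, and a permutation of the variables multiplies both
by its sign; cancelling `Δ` in the domain `𝔽₂[X]` gives homogeneity and symmetry of `F_k`.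

For the exponents of `X₁`, regard everything as polynomials in `X₁` over the fraction field
`K` of the other variables. Then `Δ` and `Δ₁` are 2-polynomials (only exponents `2 ^ e`
occur), of degrees `d = 2 ^ (k - 1)` and `≤ 2 d`, so `deg F_k ≤ d`. Choose `a ∈ K` so that
`H = F_k - a Δ` has degree `< d`. In characteristic 2 the square `Δ ^ 2` is again a
2-polynomial, hence so is `Δ H = Δ₁ - a Δ ^ 2`; its degree is a power of 2 below `2 d`, so at
most `d`, and `H` is a constant `b`. Thus `F_k = a Δ + b`, whose exponents in `X₁` are `0` and
those of `Δ`.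
-/

open MvPolynomial Finset

theorem injective_two_pow_val (n : ℕ) : Function.Injective fun i : Fin n => 2 ^ (i : ℕ) :=
  (Nat.pow_right_injective le_rfl).comp Fin.val_injective

theorem sum_two_pow_skip_one (n : ℕ) :
    ∑ i : Fin (n + 1), 2 ^ (if (i : ℕ) = 0 then 0 else (i : ℕ) + 1) =
      ∑ i : Fin (n + 1), 2 ^ (i : ℕ) + (2 ^ (n + 1) - 2) := by
  have hgeom : ∑ i : Fin n, 2 ^ (i : ℕ) + 1 = 2 ^ n := by
    rw [Fin.sum_univ_eq_sum_range (2 ^ ·), Nat.geomSum_eq le_rfl, Nat.add_one_sub_one,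
      Nat.div_one, Nat.sub_add_cancel Nat.one_le_two_pow]
  simp only [Fin.sum_univ_succ, Fin.val_zero, Fin.val_succ, if_true, Nat.add_one_ne_zero,
    if_false, pow_succ, ← sum_mul]
  omega

namespace MvPolynomial

section PowerMatrix

variable {R ι : Type*} [CommRing R] [Fintype ι] [DecidableEq ι]

theorem coeff_det_X_pow (d : ι → ℕ) (m : ι →₀ ℕ) :
    coeff m (Matrix.of fun i j => (X j : MvPolynomial ι R) ^ d i).det =
      ∑ σ : Equiv.Perm ι, if ⇑m = d ∘ σ then ((Equiv.Perm.sign σ : ℤ) : R) else 0 := by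
  simp only [Matrix.det_apply', coeff_sum, Matrix.of_apply]
  refine sum_congr rfl fun σ _ => ?_
  have hm : m = Finsupp.indicator univ (fun i _ => d (σ i)) ↔ ⇑m = d ∘ σ := by
    rw [DFunLike.ext_iff, _root_.funext_iff]; simp
  rw [← map_intCast (C : R →+* MvPolynomial ι R), coeff_C_mul, coeff_prod_X_pow]
  simp only [hm, mul_ite, mul_one, mul_zero]

theorem exists_perm_of_mem_support_det_X_pow {d : ι → ℕ} {m : ι →₀ ℕ}
    (hm : m ∈ (Matrix.of fun i j => (X j : MvPolynomial ι R) ^ d i).det.support) :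
    ∃ σ : Equiv.Perm ι, ⇑m = d ∘ σ := by
  by_contra! h
  rw [mem_support_iff, coeff_det_X_pow] at hm
  exact hm (sum_eq_zero fun σ _ => if_neg (h σ))

theorem coeff_det_X_pow_of_injective {d : ι → ℕ} (hd : Function.Injective d)
    (σ : Equiv.Perm ι) :
    coeff (Finsupp.equivFunOnFinite.symm (d ∘ σ))
      (Matrix.of fun i j => (X j : MvPolynomial ι R) ^ d i).det =
        ((Equiv.Perm.sign σ : ℤ) : R) := by
  rw [coeff_det_X_pow, sum_eq_single σ]
  · simp
  · intro τ _ hτ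
    refine if_neg fun h => hτ (Equiv.ext fun i => hd ?_)
    exact (congrFun h i).symm
  · simp

theorem det_X_pow_ne_zero [Nontrivial R] {d : ι → ℕ} (hd : Function.Injective d) :
    (Matrix.of fun i j => (X j : MvPolynomial ι R) ^ d i).det ≠ 0 :=
  ne_zero_iff.mpr ⟨_, (coeff_det_X_pow_of_injective hd 1).trans_ne (by simp)⟩

theorem image_support_det_X_pow_subset (d : ι → ℕ) (j : ι) :
    (Matrix.of fun i j => (X j : MvPolynomial ι R) ^ d i).det.support.image (fun m => m j) ⊆
      univ.image d := by
  simp only [subset_iff, mem_image, mem_univ, true_and, forall_exists_index, and_imp]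
  rintro _ m hm rfl
  obtain ⟨σ, hσ⟩ := exists_perm_of_mem_support_det_X_pow hm
  exact ⟨σ j, by simp [hσ]⟩

theorem image_support_det_X_pow [Nontrivial R] {d : ι → ℕ} (hd : Function.Injective d)
    (j : ι) :
    (Matrix.of fun i j => (X j : MvPolynomial ι R) ^ d i).det.support.image (fun m => m j) =
      univ.image d := by
  refine (image_support_det_X_pow_subset d j).antisymm ?_
  simp only [subset_iff, mem_image, mem_univ, true_and, mem_support_iff, forall_exists_index]
  rintro _ i rfl
  refine ⟨_, ?_, (by simp : Finsupp.equivFunOnFinite.symm (d ∘ Equiv.swap j i) j = d i)⟩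
  rw [coeff_det_X_pow_of_injective hd]
  rcases Int.units_eq_one_or (Equiv.Perm.sign (Equiv.swap j i)) with h | h <;> simp [h]

theorem isHomogeneous_det_X_pow (d : ι → ℕ) :
    (Matrix.of fun i j => (X j : MvPolynomial ι R) ^ d i).det.IsHomogeneous (∑ i, d i) := by
  intro m hm
  obtain ⟨σ, hσ⟩ := exists_perm_of_mem_support_det_X_pow (mem_support_iff.mpr hm)
  show Finsupp.weight (fun _ => 1) m = _
  rw [← Finsupp.degree_eq_weight_one, Finsupp.degree_eq_sum, hσ]
  exact Equiv.sum_comp σ d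

theorem rename_det_X_pow (d : ι → ℕ) (π : Equiv.Perm ι) :
    rename π (Matrix.of fun i j => (X j : MvPolynomial ι R) ^ d i).det =
      ((Equiv.Perm.sign π : ℤ) : MvPolynomial ι R) *
        (Matrix.of fun i j => (X j : MvPolynomial ι R) ^ d i).det := by
  rw [← AlgHom.coe_toRingHom, RingHom.map_det, ← Matrix.det_permute']
  congr 1
  ext i j
  simp

theorem isSymmetric_of_det_X_pow_mul_eq [IsDomain R] {d d' : ι → ℕ} (hd : Function.Injective d)
    {F : MvPolynomial ι R}
    (h : (Matrix.of fun i j => (X j : MvPolynomial ι R) ^ d i).det * F =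
      (Matrix.of fun i j => (X j : MvPolynomial ι R) ^ d' i).det) :
    F.IsSymmetric := by
  intro π
  have hsign : ((Equiv.Perm.sign π : ℤ) : MvPolynomial ι R) ≠ 0 :=
    ((Equiv.Perm.sign π).isUnit.map (Int.castRingHom _)).ne_zero
  apply mul_left_cancel₀ (mul_ne_zero hsign (det_X_pow_ne_zero hd))
  have := congrArg (rename π) h
  rw [map_mul, rename_det_X_pow, rename_det_X_pow, ← h] at this
  linear_combination this

end PowerMatrix

attribute [local instance] MvPolynomial.gradedAlgebra in
theorem homogeneousComponent_mul_of_isHomogeneous_left {σ R : Type*} [CommSemiring R]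
    {A : MvPolynomial σ R} {a : ℕ} (hA : A.IsHomogeneous a) (F : MvPolynomial σ R) (n : ℕ) :
    homogeneousComponent (a + n) (A * F) = A * homogeneousComponent n F := by
  rw [← decomposition.decompose'_apply, ← decomposition.decompose'_apply]
  exact DirectSum.coe_decompose_mul_add_of_left_mem (homogeneousSubmodule σ R) hA

theorem IsHomogeneous.of_mul_left {σ R : Type*} [CommRing R] [IsDomain R]
    {A F : MvPolynomial σ R} {a n : ℕ} (hA : A.IsHomogeneous a) (hA0 : A ≠ 0)
    (hAF : (A * F).IsHomogeneous (a + n)) : F.IsHomogeneous n := by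
  intro m hm
  show Finsupp.weight (fun _ => 1) m = n
  rw [← Finsupp.degree_eq_weight_one]
  by_contra hmn
  have hzero : homogeneousComponent m.degree F = 0 := by
    refine (mul_eq_zero.mp ?_).resolve_left hA0
    rw [← homogeneousComponent_mul_of_isHomogeneous_left hA, homogeneousComponent_of_mem hAF,
      if_neg (by omega)]
  have := congrArg (coeff m) hzero
  rw [coeff_homogeneousComponent, if_pos rfl, coeff_zero] at this
  exact hm this

theorem support_map_finSuccEquiv {R S : Type*} [CommSemiring R] [Semiring S] {n : ℕ}
    {f : MvPolynomial (Fin n) R →+* S} (hf : Function.Injective f)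
    (p : MvPolynomial (Fin (n + 1)) R) :
    ((finSuccEquiv R n p).map f).support = p.support.image (fun m => m 0) := by
  rw [Polynomial.support_map_of_injective _ hf, support_finSuccEquiv]

end MvPolynomial

namespace Polynomial

theorem support_sq_subset_image_two_mul {R : Type*} [CommSemiring R] [CharP R 2] (P : R[X]) :
    (P ^ 2).support ⊆ P.support.image (2 * ·) := by
  rw [← map_frobenius_expand]
  intro v hv
  have hv' := support_map_subset _ _ hv
  rw [mem_support_iff, coeff_expand two_pos] at hv'
  split_ifs at hv' with h2
  · obtain ⟨w, rfl⟩ := h2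
    exact mem_image.mpr ⟨w, mem_support_iff.mpr (by simpa using hv'), rfl⟩
  · exact absurd rfl hv'

theorem exists_eq_C_mul_add_C_of_two_pow_support {K : Type*} [Field K] [CharP K 2] {P G : K[X]}
    (hP0 : P ≠ 0) (hP : ↑P.support ⊆ Set.range (2 ^ · : ℕ → ℕ))
    (hPG : ↑(P * G).support ⊆ Set.range (2 ^ · : ℕ → ℕ))
    (hdeg : (P * G).natDegree ≤ 2 * P.natDegree) :
    ∃ a b : K, G = C a * P + C b := by
  obtain ⟨u, hu⟩ := hP (natDegree_mem_support_of_nonzero hP0)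
  set d := P.natDegree
  have hu : 2 ^ u = d := hu
  have hGd : G.natDegree ≤ d := by
    rcases eq_or_ne G 0 with rfl | hG0
    · simp
    · rw [natDegree_mul hP0 hG0] at hdeg; omega
  set a := G.coeff d / P.leadingCoeff
  set H := G - C a * P with hH
  have hHd : H.natDegree ≤ d - 1 := by
    refine natDegree_le_pred ((natDegree_sub_le_of_le hGd (natDegree_C_mul_le a P)).trans_eq
      (max_self d)) ?_
    rw [coeff_sub, coeff_C_mul, coeff_natDegree, div_mul_cancel₀ _ (leadingCoeff_ne_zero.mpr hP0),
      sub_self]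
  have hPH : ↑(P * H).support ⊆ Set.range (2 ^ · : ℕ → ℕ) := by
    intro v hv
    rw [Finset.mem_coe, mem_support_iff, show P * H = P * G - C a * P ^ 2 by ring, coeff_sub,
      coeff_C_mul] at hv
    by_cases hv' : (P * G).coeff v = 0
    · rw [hv', zero_sub, neg_ne_zero] at hv
      obtain ⟨w, hw, rfl⟩ := mem_image.mp
        (support_sq_subset_image_two_mul P (mem_support_iff.mpr (right_ne_zero_of_mul hv)))
      obtain ⟨j, rfl⟩ := hP hw
      exact ⟨j + 1, by simp [pow_succ, mul_comm]⟩
    · exact hPG (mem_support_iff.mpr hv')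
  have hH0 : H.natDegree = 0 := by
    rcases eq_or_ne H 0 with h | hH0
    · simp [h]
    obtain ⟨w, hw⟩ := hPH (natDegree_mem_support_of_nonzero (mul_ne_zero hP0 hH0))
    have hw : 2 ^ w = d + H.natDegree := hw.trans (natDegree_mul hP0 hH0)
    have hwu : 2 ^ w < 2 ^ (u + 1) := by have := Nat.one_le_two_pow (n := u); rw [pow_succ]; omega
    have := Nat.pow_le_pow_right two_pos
      (Nat.lt_succ_iff.mp ((pow_lt_pow_iff_right₀ one_lt_two).mp hwu))
    omega
  exact ⟨a, H.coeff 0, by rw [← eq_C_of_natDegree_eq_zero hH0, hH]; ring⟩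

end Polynomial

namespace MvPolynomial

open Polynomial in
theorem apply_zero_eq_zero_or_two_pow_of_det_mul_eq {R : Type*} [CommRing R] [IsDomain R]
    [CharP R 2] {n : ℕ} {e : Fin (n + 1) → ℕ} (he : ∀ i, e i ≤ n + 1)
    {F : MvPolynomial (Fin (n + 1)) R}
    (h : (Matrix.of fun i j : Fin (n + 1) =>
          (X j : MvPolynomial (Fin (n + 1)) R) ^ 2 ^ (i : ℕ)).det * F =
        (Matrix.of fun i j : Fin (n + 1) => (X j : MvPolynomial (Fin (n + 1)) R) ^ 2 ^ e i).det)
    {m : Fin (n + 1) →₀ ℕ} (hm : m ∈ F.support) :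
    m 0 = 0 ∨ ∃ i < n + 1, m 0 = 2 ^ i := by
  let K := FractionRing (MvPolynomial (Fin n) R)
  have hK := IsFractionRing.injective (MvPolynomial (Fin n) R) K
  have : CharP K 2 := charP_of_injective_algebraMap hK 2
  let Φ : MvPolynomial (Fin (n + 1)) R →+* K[X] :=
    (mapRingHom (algebraMap _ K)).comp (finSuccEquiv R n).toRingHom
  have hΦ (p) : (Φ p).support = p.support.image (fun m => m 0) :=
    support_map_finSuccEquiv hK p
  have hP := (hΦ _).trans (image_support_det_X_pow (injective_two_pow_val _) 0)
  have hPG := (hΦ _).trans_subset (image_support_det_X_pow_subset (R := R) (fun i => 2 ^ e i) 0)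
  rw [← h, map_mul] at hPG
  set P := Φ (Matrix.of fun i j : Fin (n + 1) =>
    (X j : MvPolynomial (Fin (n + 1)) R) ^ 2 ^ (i : ℕ)).det
  have hP0 : P ≠ 0 := nonempty_support_iff.mp (hP ▸ univ_nonempty.image _)
  have hdeg : (P * Φ F).natDegree ≤ 2 * P.natDegree := by
    have hlast : 2 ^ n ≤ P.natDegree :=
      le_natDegree_of_mem_supp _ (hP ▸ mem_image_of_mem _ (mem_univ (Fin.last n)))
    rcases eq_or_ne (P * Φ F) 0 with h0 | h0
    · simp [h0]
    obtain ⟨i, -, hi⟩ := mem_image.mp (hPG (natDegree_mem_support_of_nonzero h0))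
    rw [← hi]
    calc 2 ^ e i ≤ 2 ^ (n + 1) := Nat.pow_le_pow_right two_pos (he i)
      _ ≤ 2 * P.natDegree := by rw [pow_succ']; omega
  obtain ⟨a, b, hab⟩ := exists_eq_C_mul_add_C_of_two_pow_support hP0
    (by rw [hP]; simp [Set.subset_def])
    (fun v hv => by obtain ⟨i, -, rfl⟩ := mem_image.mp (hPG hv); exact ⟨e i, rfl⟩) hdeg
  have hm0 : m 0 ∈ (Φ F).support := hΦ F ▸ mem_image_of_mem _ hm
  rcases eq_or_ne (m 0) 0 with h0 | h0
  · exact Or.inl h0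
  rw [Polynomial.mem_support_iff, hab, Polynomial.coeff_add, Polynomial.coeff_C_mul,
    Polynomial.coeff_C, if_neg h0, add_zero] at hm0
  obtain ⟨i, -, hi⟩ :=
    mem_image.mp (hP ▸ Polynomial.mem_support_iff.mpr (right_ne_zero_of_mul hm0))
  exact Or.inr ⟨i, i.isLt, hi.symm⟩

end MvPolynomial

/-- Let `Fk = Δ_1(X_1,…,X_k)/Δ(X_1,…,X_k) ∈ F_2[X_1,…,X_k]` (i.e. `Δ · Fk = Δ_1`). Then
`Fk` is homogeneous of degree `2^k - 2`, symmetric in the variables, and the exponents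
of `X_1` occurring in `Fk` are among `{0, 2^0, 2^1, …, 2^(k-1)}`. -/
theorem Fk_properties (k : ℕ) (hk : 1 ≤ k) (Fk : MvPolynomial (Fin k) (ZMod 2))
    (hFk : Matrix.det (Matrix.of fun i j : Fin k =>
          (X j : MvPolynomial (Fin k) (ZMod 2)) ^ 2 ^ (i : ℕ)) * Fk =
        Matrix.det (Matrix.of fun i j : Fin k =>
          (X j : MvPolynomial (Fin k) (ZMod 2)) ^
            2 ^ (if (i : ℕ) = 0 then 0 else (i : ℕ) + 1))) :
    Fk.IsHomogeneous (2 ^ k - 2) ∧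
    Fk.IsSymmetric ∧
    (∀ m ∈ Fk.support, m ⟨0, hk⟩ = 0 ∨ ∃ e < k, m ⟨0, hk⟩ = 2 ^ e) := by
  obtain ⟨n, rfl⟩ : ∃ n, k = n + 1 := ⟨k - 1, by omega⟩
  refine ⟨?_, isSymmetric_of_det_X_pow_mul_eq (injective_two_pow_val _) hFk,
    fun m hm => apply_zero_eq_zero_or_two_pow_of_det_mul_eq (fun i => ?_) hFk hm⟩
  · refine (isHomogeneous_det_X_pow _).of_mul_left
      (det_X_pow_ne_zero (injective_two_pow_val _)) ?_
    rw [hFk, ← sum_two_pow_skip_one]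
    exact isHomogeneous_det_X_pow _
  · split_ifs <;> omega
end

section
/- Assume l ≥ 2, l ∣ n, r < n/l, and that there exists an r-dimensional F_2-subspace F of F_{2^n} with ∑_{0≠v∈F} 1/v = 0. Then there exists an (l+r)-dimensional F_2-subspace of F_{2^n} over which the inverses sum to zero; consequently, if F_inv is not r-th order sum-free on F_{2^n}, it is not (l+r)-th order sum-free. -/
open scoped Classical

/-!
Embed `k = F_{2^l}` in `K = F_{2^n}` and let `L(x) = x^{2^l} - x`, an `F_2`-linear map with
kernel `k`. As `∏_{u ∈ k} (X - u) = X^{2^l} - X` has derivative `-1`, the logarithmic derivative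
gives `∑_{u ∈ k} 1/(x₀ - u) = -1/L(x₀)` off `k`; on `k` both sides vanish, because the inverses
of a field with more than two elements sum to `0` (reading `0⁻¹ = 0`). So the inverses over the
fibre `x₀ - k` of `L` sum to `-1/L(x₀)`, and over `L⁻¹(S)` to `-∑_{w ∈ S} 1/w` whenever
`S ⊆ L(K)`. The image of `L` has codimension `l`, so if `r l < n` then `a ↦ (v ↦ a v mod L(K))`
has a nonzero kernel element `a`, i.e. `aF ⊆ L(K)`; `E = L⁻¹(aF)` then has dimension `l + r` and
inverse sum `-a⁻¹ ∑_{v ∈ F} 1/v = 0`. Since `x^{2^n-2} = x⁻¹` everywhere, `E` also shows that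
`F_inv` is not `(l+r)`-th order sum-free.
-/

open Polynomial Finset Module

namespace FiniteField

section

variable {K : Type*} [Field K] [Fintype K]

theorem sum_inv_eq_zero (h : 2 < Fintype.card K) : ∑ x : K, x⁻¹ = 0 := by
  rw [← _root_.Equiv.sum_comp (Equiv.inv K)]
  simpa using sum_pow_lt_card_sub_one K 1 (by omega)

theorem pow_card_sub_two_eq_inv_s19 (h : 2 < Fintype.card K) (x : K) :
    x ^ (Fintype.card K - 2) = x⁻¹ := by
  rcases eq_or_ne x 0 with rfl | hx
  · simp [zero_pow (by omega : Fintype.card K - 2 ≠ 0)]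
  · refine eq_inv_of_mul_eq_one_left ?_
    rw [← pow_succ, show Fintype.card K - 2 + 1 = Fintype.card K - 1 by omega]
    exact pow_card_sub_one_eq_one x hx

theorem prod_X_sub_C_eq_X_pow_card_sub_X : ∏ u : K, (X - C u) = X ^ Fintype.card K - X := by
  have hsplits : Splits (X ^ Fintype.card K - X : K[X]) := by
    rw [splits_iff_card_roots, roots_X_pow_card_sub_X,
      X_pow_card_sub_X_natDegree_eq K Fintype.one_lt_card]
    rfl
  conv_rhs => rw [hsplits.eq_prod_roots_of_monic
    (monic_X_pow_sub (by simpa using Fintype.one_lt_card)), roots_X_pow_card_sub_X]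
  rfl

end

variable (k K : Type*) [Field k] [Fintype k] [Field K] [Algebra k K]

/-- The paper's `L_E`, `x ↦ x ^ #k - x`: the Artin–Schreier map relative to `k`. -/
noncomputable def artinSchreier : K →ₗ[k] K :=
  (frobeniusAlgHom k K).toLinearMap - LinearMap.id

variable {k K}

theorem artinSchreier_apply (x : K) : artinSchreier k K x = x ^ Fintype.card k - x := rfl

theorem prod_X_sub_C_algebraMap :
    ∏ u : k, (X - C (algebraMap k K u)) = X ^ Fintype.card k - X := by
  simpa [Polynomial.map_prod] using congr_arg (map (algebraMap k K))
    (prod_X_sub_C_eq_X_pow_card_sub_X (K := k))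

theorem prod_sub_algebraMap (x : K) :
    ∏ u : k, (x - algebraMap k K u) = artinSchreier k K x := by
  simpa [eval_prod, artinSchreier_apply] using
    congr_arg (eval x) (prod_X_sub_C_algebraMap (k := k))

theorem artinSchreier_eq_zero_iff {x : K} :
    artinSchreier k K x = 0 ↔ x ∈ Set.range (algebraMap k K) := by
  rw [← prod_sub_algebraMap, prod_eq_zero_iff]
  exact ⟨fun ⟨u, _, hu⟩ => ⟨u, (sub_eq_zero.mp hu).symm⟩,
    fun ⟨u, hu⟩ => ⟨u, mem_univ u, sub_eq_zero.mpr hu.symm⟩⟩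

theorem sum_inv_sub_algebraMap (hk : 2 < Fintype.card k) (x : K) :
    ∑ u : k, (x - algebraMap k K u)⁻¹ = -(artinSchreier k K x)⁻¹ := by
  by_cases hx : artinSchreier k K x = 0
  · obtain ⟨y, rfl⟩ := artinSchreier_eq_zero_iff.mp hx
    simp_rw [hx, inv_zero, neg_zero, ← map_sub, ← map_inv₀, ← map_sum]
    simpa using congr_arg (algebraMap k K)
      (((Equiv.subLeft y).sum_comp (·⁻¹)).trans (sum_inv_eq_zero hk))
  · set f : K[X] := ∏ u : k, (X - C (algebraMap k K u)) with hf
    have hroots : f.roots = univ.val.map (algebraMap k K) := by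
      rw [← roots_multiset_prod_X_sub_C (univ.val.map (algebraMap k K)), Multiset.map_map]
      rfl
    have heval : f.eval x = artinSchreier k K x := by
      rw [hf, eval_prod]
      simpa using prod_sub_algebraMap x
    have hderiv : derivative f = -1 := by
      have hq : (Fintype.card k : K) = 0 := by
        rw [← map_natCast (algebraMap k K), cast_card_eq_zero, map_zero]
      rw [hf, prod_X_sub_C_algebraMap, derivative_sub, derivative_X_pow, derivative_X, hq]
      simp
    have hsplits : Splits f := Splits.prod fun u _ => Splits.X_sub_C _
    have := hsplits.eval_derivative_div_eval_of_ne_zero (heval ▸ hx)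
    rw [hroots, Multiset.map_map, heval, hderiv] at this
    simpa [neg_div] using this.symm

variable [Fintype K]

theorem sum_inv_fiber_artinSchreier (hk : 2 < Fintype.card k) (x₀ : K) :
    ∑ x with artinSchreier k K x = artinSchreier k K x₀, x⁻¹ = -(artinSchreier k K x₀)⁻¹ := by
  have hfiber : ({x | artinSchreier k K x = artinSchreier k K x₀} : Finset K) =
      univ.image fun u : k => x₀ - algebraMap k K u := by
    ext x
    simp only [mem_filter, mem_univ, true_and, mem_image]
    rw [← sub_eq_zero, ← map_sub, ← neg_sub, map_neg, neg_eq_zero, artinSchreier_eq_zero_iff]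
    exact ⟨fun ⟨u, hu⟩ => ⟨u, by rw [hu, sub_sub_cancel]⟩,
      fun ⟨u, hu⟩ => ⟨u, by rw [← hu, sub_sub_cancel]⟩⟩
  rw [hfiber, sum_image fun u _ v _ h => (algebraMap k K).injective (sub_right_injective h)]
  exact sum_inv_sub_algebraMap hk x₀

theorem sum_inv_preimage_artinSchreier (hk : 2 < Fintype.card k) (S : Set K)
    (hS : S ⊆ Set.range (artinSchreier k K)) :
    ∑ x with artinSchreier k K x ∈ S, x⁻¹ = -∑ w with w ∈ S, w⁻¹ := by
  rw [← sum_fiberwise_of_maps_to (t := univ.filter (· ∈ S))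
    fun x hx => by simpa using (mem_filter.mp hx).2, ← sum_neg_distrib]
  refine sum_congr rfl fun w hw => ?_
  have hwS : w ∈ S := (mem_filter.mp hw).2
  obtain ⟨x₀, rfl⟩ := hS hwS
  rw [filter_filter, filter_congr fun x _ => and_iff_right_of_imp fun h => h ▸ hwS,
    sum_inv_fiber_artinSchreier hk x₀]

end FiniteField

theorem Submodule.finrank_comap_of_le_range {K V W : Type*} [DivisionRing K] [AddCommGroup V]
    [Module K V] [AddCommGroup W] [Module K W] [FiniteDimensional K V] (f : V →ₗ[K] W)
    {U : Submodule K W} (hU : U ≤ LinearMap.range f) :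
    finrank K (U.comap f) = finrank K U + finrank K (LinearMap.ker f) := by
  have hker : LinearMap.ker f ≤ U.comap f := fun x hx => by simp [LinearMap.mem_ker.mp hx]
  rw [← (f.domRestrict (U.comap f)).finrank_range_add_finrank_ker, LinearMap.range_domRestrict,
    Submodule.map_comap_eq_of_le hU, LinearMap.ker_domRestrict,
    (Submodule.comapSubtypeEquivOfLe hker).finrank_eq]

/-- `a ↦ (v ↦ a v mod W)` maps `A` to the smaller space `Hom(F, A ⧸ W)`, so it has a kernel. -/
theorem exists_ne_zero_forall_mul_mem {K A : Type*} [Field K] [Ring A] [Algebra K A]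
    [FiniteDimensional K A] (F W : Submodule K A)
    (h : finrank K F * finrank K (A ⧸ W) < finrank K A) : ∃ a ≠ 0, ∀ v ∈ F, a * v ∈ W := by
  let Φ : A →ₗ[K] F →ₗ[K] A ⧸ W := ((LinearMap.mul K A).compl₂ F.subtype).compr₂ W.mkQ
  obtain ⟨a, ha, ha0⟩ := (Submodule.ne_bot_iff _).mp
    (LinearMap.ker_ne_bot_of_finrank_lt (f := Φ) (by rwa [finrank_linearMap]))
  refine ⟨a, ha0, fun v hv => ?_⟩
  simpa [Φ, Submodule.Quotient.mk_eq_zero] using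
    LinearMap.congr_fun (LinearMap.mem_ker.mp ha) ⟨v, hv⟩

theorem Submodule.sum_inv_map_mulLeft {R K : Type*} [CommSemiring R] [Field K] [Fintype K]
    [Algebra R K] (F : Submodule R K) {a : K} (ha : a ≠ 0) :
    ∑ w with w ∈ F.map (LinearMap.mulLeft R a), w⁻¹ = a⁻¹ * ∑ v with v ∈ F, v⁻¹ := by
  have himage : univ.filter (· ∈ F.map (LinearMap.mulLeft R a)) =
      (univ.filter (· ∈ F)).image (a * ·) := by
    ext w
    simp [Submodule.mem_map]
  rw [himage, sum_image fun _ _ _ _ h => mul_left_cancel₀ ha h, mul_sum]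
  simp_rw [mul_inv]

theorem Finset.sum_inv_filter_and_ne_zero {K : Type*} [DivisionRing K] (s : Finset K)
    (p : K → Prop) : ∑ x ∈ s with p x ∧ x ≠ 0, x⁻¹ = ∑ x ∈ s with p x, x⁻¹ := by
  rw [← filter_filter]
  exact sum_filter_of_ne fun x _ hx => by simpa using hx

namespace FiniteField

variable (p : ℕ) [Fact p.Prime] {k K : Type*} [Field k] [Fintype k] [Field K] [Fintype K]
  [Algebra k K] [Algebra (ZMod p) K]

local notation "L" => AddMonoidHom.toZModLinearMap p (LinearMap.toAddMonoidHom (artinSchreier k K))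

theorem finrank_ker_artinSchreier {m : ℕ} (hk : Fintype.card k = p ^ m) :
    finrank (ZMod p) (LinearMap.ker L) = m := by
  refine Nat.pow_right_injective (Fact.out : p.Prime).two_le ?_
  change p ^ _ = p ^ m
  rw [pow_finrank_eq_natCard, ← hk, ← Nat.card_eq_fintype_card,
    ← Nat.card_range_of_injective (algebraMap k K).injective]
  exact Nat.card_congr (Equiv.subtypeEquivRight fun _ => artinSchreier_eq_zero_iff)

theorem exists_finrank_eq_add_sum_inv_eq_zero (hk : 2 < Fintype.card k)
    (F : Submodule (ZMod p) K)
    (hF : finrank (ZMod p) F * finrank (ZMod p) (LinearMap.ker L) < finrank (ZMod p) K)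
    (hsum : ∑ x with x ∈ F, x⁻¹ = 0) :
    ∃ E : Submodule (ZMod p) K, finrank (ZMod p) E =
      finrank (ZMod p) (LinearMap.ker L) + finrank (ZMod p) F ∧ ∑ x with x ∈ E, x⁻¹ = 0 := by
  have hcodim : finrank (ZMod p) (K ⧸ LinearMap.range L) = finrank (ZMod p) (LinearMap.ker L) := by
    have := (L).finrank_range_add_finrank_ker
    have := (LinearMap.range L).finrank_quotient_add_finrank
    omega
  obtain ⟨a, ha0, haF⟩ := exists_ne_zero_forall_mul_mem F (LinearMap.range L) (hcodim ▸ hF)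
  have haF_le : F.map (LinearMap.mulLeft (ZMod p) a) ≤ LinearMap.range L := by
    rintro _ ⟨v, hv, rfl⟩
    exact haF v hv
  refine ⟨(F.map (LinearMap.mulLeft (ZMod p) a)).comap L, ?_, ?_⟩
  · rw [Submodule.finrank_comap_of_le_range L haF_le, add_comm,
      (Submodule.equivMapOfInjective (LinearMap.mulLeft (ZMod p) a)
        (mul_right_injective₀ ha0) F).finrank_eq]
  · calc ∑ x with x ∈ (F.map (LinearMap.mulLeft (ZMod p) a)).comap L, x⁻¹
        = -∑ w with w ∈ F.map (LinearMap.mulLeft (ZMod p) a), w⁻¹ :=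
          sum_inv_preimage_artinSchreier hk _ fun w hw => haF_le hw
      _ = 0 := by rw [Submodule.sum_inv_map_mulLeft F ha0, hsum, mul_zero, neg_zero]

end FiniteField

theorem GaloisField.fintype_card (p : ℕ) [Fact p.Prime] {n : ℕ} (h : n ≠ 0)
    [Fintype (GaloisField p n)] : Fintype.card (GaloisField p n) = p ^ n := by
  rw [Fintype.card_eq_nat_card, GaloisField.card p n h]

theorem not_kthOrderSumFree_of_sum_inv_eq_zero {n : ℕ} (hn : 2 ≤ n)
    (E : Submodule (ZMod 2) (GaloisField 2 n)) (hE : ∑ x with x ∈ E, x⁻¹ = 0) :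
    ¬ KthOrderSumFree n (finrank (ZMod 2) E) (fun x => x ^ (2 ^ n - 2)) := by
  have hcard : Fintype.card (GaloisField 2 n) = 2 ^ n := GaloisField.fintype_card 2 (by omega)
  have h2 : 2 < Fintype.card (GaloisField 2 n) :=
    hcard ▸ Nat.pow_lt_pow_right one_lt_two (by omega : 1 < n)
  intro hfree
  apply hfree 0 E rfl
  simp_rw [zero_add, ← hcard, FiniteField.pow_card_sub_two_eq_inv_s19 h2]
  exact hE

/-- Assume `l ≥ 2`, `l ∣ n`, `r < n/l`, and that there is an `r`-dimensional
`F_2`-subspace `F` of `F_{2^n}` over which the inverses sum to zero. Then there is an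
`(l+r)`-dimensional `F_2`-subspace over which the inverses sum to zero; consequently, if
`F_inv` is not `r`-th order sum-free, it is not `(l+r)`-th order sum-free. -/
theorem subspace_dim_add (n l r : ℕ) (hl : 2 ≤ l) (hln : l ∣ n) (hr : r < n / l)
    (F : Submodule (ZMod 2) (GaloisField 2 n)) (hF : Module.finrank (ZMod 2) F = r)
    (hsum : (∑ x ∈ Finset.univ.filter (fun x => x ∈ F ∧ x ≠ 0), x⁻¹) = 0) :
    (∃ E : Submodule (ZMod 2) (GaloisField 2 n),
        Module.finrank (ZMod 2) E = l + r ∧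
        (∑ x ∈ Finset.univ.filter (fun x => x ∈ E ∧ x ≠ 0), x⁻¹) = 0) ∧
    (¬ KthOrderSumFree n r (fun x => x ^ (2 ^ n - 2)) →
      ¬ KthOrderSumFree n (l + r) (fun x => x ^ (2 ^ n - 2))) := by
  have hl0 : l ≠ 0 := by omega
  have hn : n ≠ 0 := by rintro rfl; simp at hr
  obtain ⟨φ⟩ := FiniteField.nonempty_algHom_of_finrank_dvd (F := ZMod 2) (K := GaloisField 2 l)
    (L := GaloisField 2 n) (by rwa [GaloisField.finrank 2 hl0, GaloisField.finrank 2 hn])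
  let _ : Algebra (GaloisField 2 l) (GaloisField 2 n) := φ.toAlgebra
  have hk : Fintype.card (GaloisField 2 l) = 2 ^ l := GaloisField.fintype_card 2 hl0
  have hker := FiniteField.finrank_ker_artinSchreier 2 (K := GaloisField 2 n) hk
  obtain ⟨E, hdim, hE⟩ := FiniteField.exists_finrank_eq_add_sum_inv_eq_zero 2
    (hk ▸ Nat.pow_lt_pow_right one_lt_two (by omega : 1 < l)) F
    (by
      rw [hF, hker, GaloisField.finrank 2 hn, mul_comm]
      exact (Nat.lt_div_iff_mul_lt' hln r).mp hr)
    (by rwa [← sum_inv_filter_and_ne_zero])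
  rw [hker, hF] at hdim
  exact ⟨⟨E, hdim, by rwa [sum_inv_filter_and_ne_zero]⟩,
    fun _ => hdim ▸ not_kthOrderSumFree_of_sum_inv_eq_zero
      (hl.trans (Nat.le_of_dvd (Nat.pos_of_ne_zero hn) hln)) E hE⟩
end
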